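/- Fix an integer d ≥ 16 and γ > 0, let Π := { π ∈ ℝ^d : ‖π‖₂ ≤ 1 } be the Euclidean unit ball, and set ε := min( e^{d/8}/(6γ), 1/2 ). For each unit vector v ∈ ℝ^d define f_v(π) := relu(⟨v, π⟩ − (1 − ε)), where relu(x) = max(x, 0), so that f_v has maximal value ε over Π (attained at π = v). Then for every Borel probability measure p on Π: sup_{v : ‖v‖₂ = 1} ∫ [ ε − f_v(π) − γ·D_H²(Rad(f_v(π)), Rad(0)) ] dp(π) ≥ min( e^{d/8}/(24γ), 1/8 ). -/

import Mathlib

open MeasureTheory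
open scoped RealInnerProductSpace

/-- Squared Hellinger distance `D_H²(P,Q) = ∫ (√(dP/dν) − √(dQ/dν))² dν`
computed with the dominating measure `ν = P + Q`. -/
noncomputable def sqHellinger {α : Type*} [MeasurableSpace α] (P Q : Measure α) : ℝ :=
  ∫ x, (Real.sqrt ((P.rnDeriv (P + Q)) x).toReal
      - Real.sqrt ((Q.rnDeriv (P + Q)) x).toReal) ^ 2 ∂(P + Q)

/-- Rademacher distribution on `{−1,+1} ⊆ ℝ` with mean `m`: it assigns probability
`(1+m)/2` to `+1` and `(1−m)/2` to `−1`. -/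
noncomputable def rad (m : ℝ) : Measure ℝ :=
  ENNReal.ofReal ((1 + m) / 2) • Measure.dirac 1 +
    ENNReal.ofReal ((1 - m) / 2) • Measure.dirac (-1)

/-!
Take the `2 ^ d` unit vectors `v_s = s / √d`, `s ∈ {±1}ᵈ`. For a fixed `π` in the unit ball the
Chernoff bound with `cosh x ≤ exp (x² / 2)` shows that at most a fraction `exp (-d / 8)` of them
satisfy `⟪v_s, π⟫ ≥ 1 / 2`, so averaging over `p` some `v_s` has
`p (⟪v_s, π⟫ ≥ 1 / 2) ≤ exp (-d / 8)`. As `ε ≤ 1 / 2`, `f_v(π) = 0` unless `⟪v, π⟫ ≥ 1 / 2`, and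
always `f_v(π) ≤ ε` and `D_H²(Rad m, Rad 0) ≤ m²`; so the integrand is `ε` off that event and at
least `-γ ε²` on it, and the integral for `v_s` is at least `ε - (1 + γ ε) ε exp (-d / 8) ≥ ε / 2`,
the choice of `ε` giving `γ ε exp (-d / 8) ≤ 1 / 6`; the claimed bound is `ε / 4`.
-/

lemma Real.sqrt_toReal_ofReal (x : ℝ) : √(ENNReal.ofReal x).toReal = √x := by
  rcases le_total x 0 with hx | hx
  · rw [ENNReal.ofReal_of_nonpos hx, ENNReal.toReal_zero, Real.sqrt_zero,
      Real.sqrt_eq_zero_of_nonpos hx]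
  · rw [ENNReal.toReal_ofReal hx]

lemma Real.mul_sqrt_sub_sqrt_sq {a b c : ℝ} (ha : 0 ≤ a) (hb : 0 ≤ b) (hc : 0 ≤ c) :
    c * (√a - √b) ^ 2 = (√(a * c) - √(b * c)) ^ 2 := by
  rw [Real.sqrt_mul ha, Real.sqrt_mul hb, ← sub_mul, mul_pow, Real.sq_sqrt hc, mul_comm]

lemma Real.sqrt_sub_sqrt_sq_le (x : ℝ) {y : ℝ} (hy : 0 < y) :
    (√x - √y) ^ 2 ≤ (x - y) ^ 2 / y := by
  rw [le_div_iff₀ hy]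
  rcases le_total x 0 with hx | hx
  · rw [Real.sqrt_eq_zero_of_nonpos hx, zero_sub, neg_sq, Real.sq_sqrt hy.le]
    nlinarith
  · have key : (√x - √y) ^ 2 * √y ^ 2 ≤ (√x ^ 2 - √y ^ 2) ^ 2 := by
      have hw : √y ^ 2 ≤ (√x + √y) ^ 2 := by nlinarith [Real.sqrt_nonneg x, Real.sqrt_nonneg y]
      calc (√x - √y) ^ 2 * √y ^ 2 ≤ (√x - √y) ^ 2 * (√x + √y) ^ 2 := by gcongr
        _ = (√x ^ 2 - √y ^ 2) ^ 2 := by ring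
    rwa [Real.sq_sqrt hx, Real.sq_sqrt hy.le] at key

section Hellinger

variable {α : Type*} [MeasurableSpace α]

lemma MeasureTheory.Measure.rnDeriv_mul_measure_singleton [MeasurableSingletonClass α]
    {μ ν : Measure α} [μ.HaveLebesgueDecomposition ν] [SFinite ν] (hμν : μ ≪ ν) (x : α) :
    μ.rnDeriv ν x * ν {x} = μ {x} := by
  rw [← lintegral_singleton, Measure.setLIntegral_rnDeriv hμν]

lemma sqHellinger_nonneg (P Q : Measure α) : 0 ≤ sqHellinger P Q :=
  integral_nonneg fun _ => sq_nonneg _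

theorem sqHellinger_eq_sum_of_measure_compl_eq_zero [MeasurableSingletonClass α]
    {P Q : Measure α} [IsFiniteMeasure P] [IsFiniteMeasure Q] (S : Finset α)
    (hP : P (↑S)ᶜ = 0) (hQ : Q (↑S)ᶜ = 0) :
    sqHellinger P Q = ∑ x ∈ S, (√(P.real {x}) - √(Q.real {x})) ^ 2 := by
  have hS : ∀ᵐ x ∂(P + Q), x ∈ (S : Set α) := by
    rw [ae_iff, Measure.add_apply]
    exact add_eq_zero.2 ⟨hP, hQ⟩
  have hatom : ∀ {μ : Measure α} [IsFiniteMeasure μ], μ ≪ P + Q → ∀ x,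
      (μ.rnDeriv (P + Q) x).toReal * (P + Q).real {x} = μ.real {x} := fun hμ x => by
    rw [measureReal_def, measureReal_def, ← ENNReal.toReal_mul,
      Measure.rnDeriv_mul_measure_singleton hμ]
  rw [sqHellinger,
    ← setIntegral_eq_integral_of_ae_compl_eq_zero (hS.mono fun x hx hx' => absurd hx hx'),
    setIntegral_finset S IntegrableOn.finset]
  refine Finset.sum_congr rfl fun x _ => ?_
  rw [smul_eq_mul,
    Real.mul_sqrt_sub_sqrt_sq ENNReal.toReal_nonneg ENNReal.toReal_nonneg measureReal_nonneg,
    hatom (Measure.AbsolutelyContinuous.rfl.add_right Q) x,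
    hatom (Measure.AbsolutelyContinuous.rfl.add_right' P) x]

end Hellinger

instance (m : ℝ) : IsFiniteMeasure (rad m) := by
  constructor
  simp [rad, lt_top_iff_ne_top]

lemma rad_singleton_one (m : ℝ) : rad m {1} = ENNReal.ofReal ((1 + m) / 2) := by
  norm_num [rad, Pi.single_apply]

lemma rad_singleton_neg_one (m : ℝ) : rad m {-1} = ENNReal.ofReal ((1 - m) / 2) := by
  norm_num [rad, Pi.single_apply]

lemma rad_compl_pair (m : ℝ) : rad m (↑({1, -1} : Finset ℝ))ᶜ = 0 := by
  simp [rad]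

/-- No range condition on `a`, `b` is needed: `ENNReal.ofReal` and `Real.sqrt` both send negative
arguments to `0`. -/
lemma sqHellinger_rad (a b : ℝ) :
    sqHellinger (rad a) (rad b) =
      (√((1 + a) / 2) - √((1 + b) / 2)) ^ 2 + (√((1 - a) / 2) - √((1 - b) / 2)) ^ 2 := by
  rw [sqHellinger_eq_sum_of_measure_compl_eq_zero _ (rad_compl_pair a) (rad_compl_pair b),
    Finset.sum_pair (by norm_num)]
  simp only [measureReal_def, rad_singleton_one, rad_singleton_neg_one, Real.sqrt_toReal_ofReal]

lemma sqHellinger_rad_rad_zero_le_sq (m : ℝ) : sqHellinger (rad m) (rad 0) ≤ m ^ 2 := by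
  have h₁ := Real.sqrt_sub_sqrt_sq_le ((1 + m) / 2) (y := 1 / 2) (by norm_num)
  have h₂ := Real.sqrt_sub_sqrt_sq_le ((1 - m) / 2) (y := 1 / 2) (by norm_num)
  rw [sqHellinger_rad]
  norm_num at h₁ h₂ ⊢
  linarith

section SignVectors

open Finset Real

variable {n : ℕ}

def signVector (s : Fin n → Bool) : EuclideanSpace ℝ (Fin n) :=
  WithLp.toLp 2 fun i => if s i then 1 else -1

lemma inner_signVector (s : Fin n → Bool) (x : EuclideanSpace ℝ (Fin n)) :
    ⟪signVector s, x⟫ = ∑ i, if s i then x i else -x i := by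
  simp only [signVector, PiLp.inner_apply, RCLike.inner_apply, conj_trivial]
  refine Finset.sum_congr rfl fun i _ => ?_
  split_ifs <;> simp

lemma norm_signVector (s : Fin n → Bool) : ‖signVector s‖ = √n := by
  rw [EuclideanSpace.norm_eq]
  congr 1
  simp [signVector, apply_ite]

lemma sum_exp_inner_signVector (x : EuclideanSpace ℝ (Fin n)) :
    ∑ s : Fin n → Bool, exp ⟪signVector s, x⟫ = ∏ i, 2 * cosh (x i) := by
  simp_rw [inner_signVector, exp_sum]
  rw [← Fintype.prod_sum fun i (b : Bool) => exp (if b then x i else -x i)]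
  refine prod_congr rfl fun i _ => ?_
  simp only [Fintype.sum_bool, if_true, Bool.false_eq_true, if_false, cosh_eq]
  ring

lemma sum_exp_inner_signVector_le (x : EuclideanSpace ℝ (Fin n)) :
    ∑ s : Fin n → Bool, exp ⟪signVector s, x⟫ ≤ 2 ^ n * exp (‖x‖ ^ 2 / 2) := by
  rw [sum_exp_inner_signVector, EuclideanSpace.real_norm_sq_eq, sum_div, exp_sum,
    ← Fin.prod_const, ← prod_mul_distrib]
  gcongr with i
  exact cosh_le_exp_half_sq _

lemma card_le_inner_signVector_le_exp_neg_mul_sum (x : EuclideanSpace ℝ (Fin n)) (t : ℝ) :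
    (#{s | t ≤ ⟪signVector s, x⟫} : ℝ) ≤ exp (-t) * ∑ s, exp ⟪signVector s, x⟫ := by
  rw [mul_sum, card_eq_sum_ones, Nat.cast_sum, Nat.cast_one, sum_filter]
  gcongr with s
  split_ifs with h
  · rw [← exp_add]
    exact one_le_exp (by linarith)
  · positivity

theorem card_le_inner_signVector_le (x : EuclideanSpace ℝ (Fin n)) {t r : ℝ} (ht : 0 ≤ t)
    (hr : 0 < r) (hx : ‖x‖ ≤ r) :
    (#{s | t ≤ ⟪signVector s, x⟫} : ℝ) ≤ 2 ^ n * exp (-t ^ 2 / (2 * r ^ 2)) := by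
  -- Markov's inequality for `exp (c ⟪signVector s, x⟫)`, with the optimal `c`.
  set c := t / r ^ 2 with hc_def
  have hc : 0 ≤ c := by positivity
  calc (#{s | t ≤ ⟪signVector s, x⟫} : ℝ)
      ≤ #{s | c * t ≤ ⟪signVector s, c • x⟫} := by
        refine Nat.cast_le.2 (card_le_card (monotone_filter_right _ fun s _ h => ?_))
        simpa only [inner_smul_right] using mul_le_mul_of_nonneg_left h hc
    _ ≤ exp (-(c * t)) * (2 ^ n * exp (‖c • x‖ ^ 2 / 2)) := by
      refine (card_le_inner_signVector_le_exp_neg_mul_sum _ _).trans ?_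
      gcongr
      exact sum_exp_inner_signVector_le _
    _ ≤ exp (-(c * t)) * (2 ^ n * exp (c ^ 2 * r ^ 2 / 2)) := by
      rw [norm_smul, Real.norm_of_nonneg hc, mul_pow]
      gcongr
    _ = 2 ^ n * exp (-t ^ 2 / (2 * r ^ 2)) := by
      rw [mul_left_comm, ← exp_add, hc_def]
      congr 2
      field_simp
      ring

variable {d : ℕ}

lemma norm_inv_sqrt_smul_signVector (hd : 0 < d) (s : Fin d → Bool) :
    ‖(√d)⁻¹ • signVector s‖ = 1 := by
  have hsqrt : (0 : ℝ) < √d := Real.sqrt_pos.2 (Nat.cast_pos.2 hd)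
  rw [norm_smul, norm_signVector, norm_inv, Real.norm_of_nonneg hsqrt.le,
    inv_mul_cancel₀ hsqrt.ne']

lemma card_half_le_inner_inv_sqrt_smul_signVector_le (hd : 0 < d)
    {x : EuclideanSpace ℝ (Fin d)} (hx : ‖x‖ ≤ 1) :
    (#{s | 1 / 2 ≤ ⟪(√d)⁻¹ • signVector s, x⟫} : ℝ) ≤ 2 ^ d * exp (-d / 8) := by
  have hsqrt : (0 : ℝ) < √d := Real.sqrt_pos.2 (Nat.cast_pos.2 hd)
  have hiff : ∀ s, 1 / 2 ≤ ⟪(√d)⁻¹ • signVector s, x⟫ ↔ √d / 2 ≤ ⟪signVector s, x⟫ :=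
    fun s => by
      rw [inner_smul_left, RCLike.conj_to_real, ← div_eq_inv_mul, le_div_iff₀ hsqrt,
        div_mul_eq_mul_div, one_mul]
  simp_rw [hiff]
  convert card_le_inner_signVector_le x (t := √d / 2) (by positivity) one_pos hx using 3
  rw [div_pow, Real.sq_sqrt (Nat.cast_nonneg d)]
  ring

end SignVectors

section Averaging

open Finset

theorem exists_measureReal_le_of_card_le {ι Ω : Type*} [Fintype ι] [Nonempty ι]
    [MeasurableSpace Ω] (μ : Measure Ω) [IsFiniteMeasure μ] {A : ι → Set Ω}
    (hA : ∀ i, MeasurableSet (A i)) [∀ ω, DecidablePred fun i => ω ∈ A i] {K : ℝ}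
    (hK : ∀ ω, (#{i | ω ∈ A i} : ℝ) ≤ K) :
    ∃ i, μ.real (A i) ≤ K * μ.real Set.univ / Fintype.card ι := by
  have hint : ∀ i, Integrable ((A i).indicator (1 : Ω → ℝ)) μ :=
    fun i => (integrable_const 1).indicator (hA i)
  have hsum : ∑ i, μ.real (A i) ≤ K * μ.real Set.univ :=
    calc ∑ i, μ.real (A i) = ∫ ω, ∑ i, (A i).indicator 1 ω ∂μ := by
          rw [integral_finsetSum _ fun i _ => hint i]
          simp only [integral_indicator_one (hA _)]
      _ ≤ ∫ _, K ∂μ := by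
          refine integral_mono (integrable_finsetSum _ fun i _ => hint i) (integrable_const K)
            fun ω => ?_
          simpa [Set.indicator_apply] using hK ω
      _ = K * μ.real Set.univ := by rw [integral_const, smul_eq_mul, mul_comm]
  obtain ⟨i, -, hi⟩ := exists_le_of_sum_le univ_nonempty
    (f := fun i => μ.real (A i)) (g := fun _ => K * μ.real Set.univ / Fintype.card ι) <| by
      rwa [sum_const, card_univ, nsmul_eq_mul, mul_div_cancel₀ _ (by simp)]
  exact ⟨i, hi⟩

theorem exists_signVector_measureReal_le {Ω : Type*} [MeasurableSpace Ω] {d : ℕ} (hd : 0 < d)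
    (μ : Measure Ω) [IsProbabilityMeasure μ] {X : Ω → EuclideanSpace ℝ (Fin d)}
    (hX : Measurable X) (hX1 : ∀ ω, ‖X ω‖ ≤ 1) :
    ∃ s, μ.real {ω | 1 / 2 ≤ ⟪(√d)⁻¹ • signVector s, X ω⟫} ≤ Real.exp (-d / 8) := by
  obtain ⟨s, hs⟩ := exists_measureReal_le_of_card_le μ
    (A := fun s => {ω | 1 / 2 ≤ ⟪(√d)⁻¹ • signVector s, X ω⟫})
    (fun s => measurableSet_le measurable_const (by fun_prop))
    fun ω => card_half_le_inner_inv_sqrt_smul_signVector_le hd (hX1 ω)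
  refine ⟨s, hs.trans_eq ?_⟩
  rw [probReal_univ, mul_one, Fintype.card_fun, Fintype.card_bool, Fintype.card_fin,
    Nat.cast_pow, Nat.cast_ofNat, mul_div_cancel_left₀ _ (by positivity)]

end Averaging

section ReluBandit

/-- The integrand of the decision-estimation coefficient at a decision `π` with `⟪v, π⟫ = t`. -/
noncomputable def reluDecIntegrand (ε γ t : ℝ) : ℝ :=
  ε - max (t - (1 - ε)) 0 - γ * sqHellinger (rad (max (t - (1 - ε)) 0)) (rad 0)

lemma continuous_reluDecIntegrand (ε γ : ℝ) : Continuous (reluDecIntegrand ε γ) := by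
  unfold reluDecIntegrand
  simp only [sqHellinger_rad]
  fun_prop

variable {ε γ : ℝ}

lemma reluDecIntegrand_le (hγ : 0 ≤ γ) (t : ℝ) : reluDecIntegrand ε γ t ≤ ε := by
  have := sqHellinger_nonneg (rad (max (t - (1 - ε)) 0)) (rad 0)
  have := le_max_right (t - (1 - ε)) 0
  unfold reluDecIntegrand
  nlinarith

lemma sub_mul_indicator_le_reluDecIntegrand (hε : 0 ≤ ε) (hε2 : ε ≤ 1 / 2) (hγ : 0 ≤ γ)
    {t : ℝ} (ht : t ≤ 1) :
    ε - (1 + γ * ε) * ε * (Set.Ici (1 / 2)).indicator 1 t ≤ reluDecIntegrand ε γ t := by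
  have hH := sqHellinger_rad_rad_zero_le_sq (max (t - (1 - ε)) 0)
  unfold reluDecIntegrand
  by_cases h : 1 / 2 ≤ t
  · rw [Set.indicator_of_mem (Set.mem_Ici.2 h), Pi.one_apply, mul_one]
    set m := max (t - (1 - ε)) 0
    have hm0 : 0 ≤ m := le_max_right _ _
    have hmε : m ≤ ε := max_le (by linarith) hε
    have : γ * sqHellinger (rad m) (rad 0) ≤ γ * ε ^ 2 := by
      gcongr
      exact hH.trans (pow_le_pow_left₀ hm0 hmε 2)
    nlinarith
  · have hm : max (t - (1 - ε)) 0 = 0 := max_eq_right (by linarith)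
    rw [hm] at hH
    rw [Set.indicator_of_notMem (mt Set.mem_Ici.1 h), hm]
    nlinarith

variable {Ω : Type*} [MeasurableSpace Ω] (μ : Measure Ω) [IsProbabilityMeasure μ]

lemma integral_reluDecIntegrand_le (hε : 0 ≤ ε) (hγ : 0 ≤ γ) (X : Ω → ℝ) :
    ∫ ω, reluDecIntegrand ε γ (X ω) ∂μ ≤ ε := by
  by_cases h : Integrable (fun ω => reluDecIntegrand ε γ (X ω)) μ
  · calc _ ≤ ∫ _, ε ∂μ := integral_mono h (integrable_const ε) fun ω => reluDecIntegrand_le hγ _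
      _ = ε := by simp
  · rw [integral_undef h]
    exact hε

lemma le_integral_reluDecIntegrand (hε : 0 ≤ ε) (hε2 : ε ≤ 1 / 2) (hγ : 0 ≤ γ) {X : Ω → ℝ}
    (hX : Measurable X) (hX1 : ∀ ω, X ω ≤ 1) :
    ε - (1 + γ * ε) * ε * μ.real (X ⁻¹' Set.Ici (1 / 2)) ≤
      ∫ ω, reluDecIntegrand ε γ (X ω) ∂μ := by
  set A := X ⁻¹' Set.Ici (1 / 2)
  have hA : MeasurableSet A := hX measurableSet_Ici
  have hind : Integrable (A.indicator (1 : Ω → ℝ)) μ := (integrable_const 1).indicator hA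
  have hlow : Integrable (fun ω => ε - (1 + γ * ε) * ε * A.indicator 1 ω) μ :=
    (integrable_const ε).sub (hind.const_mul _)
  have hpt : ∀ ω, ε - (1 + γ * ε) * ε * A.indicator 1 ω ≤ reluDecIntegrand ε γ (X ω) :=
    fun ω => sub_mul_indicator_le_reluDecIntegrand hε hε2 hγ (hX1 ω)
  have hint : Integrable (fun ω => reluDecIntegrand ε γ (X ω)) μ :=
    integrable_of_le_of_le
      ((continuous_reluDecIntegrand ε γ).measurable.comp hX).aestronglyMeasurable
      (ae_of_all _ hpt) (ae_of_all _ fun ω => reluDecIntegrand_le hγ _) hlow (integrable_const ε)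
  calc ε - (1 + γ * ε) * ε * μ.real A
      = ∫ ω, ε - (1 + γ * ε) * ε * A.indicator 1 ω ∂μ := by
        rw [integral_sub (integrable_const ε) (hind.const_mul _), integral_const_mul,
          integral_indicator_one hA]
        simp
    _ ≤ _ := integral_mono hlow hint hpt

lemma min_le_sub_mul_exp_neg {d : ℕ} (hd : 16 ≤ d) (hγ : 0 < γ)
    (hε : ε = min (Real.exp (d / 8) / (6 * γ)) (1 / 2)) :
    min (Real.exp (d / 8) / (24 * γ)) (1 / 8) ≤ ε - (1 + γ * ε) * ε * Real.exp (-d / 8) := by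
  have hε0 : 0 < ε := hε ▸ lt_min (by positivity) one_half_pos
  have hexp : Real.exp (-d / 8) ≤ 1 / 3 := by
    have h16 : (16 : ℝ) ≤ d := by exact_mod_cast hd
    calc Real.exp (-d / 8) ≤ Real.exp (-2) := Real.exp_le_exp.2 (by linarith)
      _ = (Real.exp 2)⁻¹ := Real.exp_neg 2
      _ ≤ 1 / 3 := by
        rw [one_div]
        exact inv_anti₀ (by norm_num) (by linarith [Real.add_one_le_exp 2])
  have hγε : γ * ε * Real.exp (-d / 8) ≤ 1 / 6 := by
    have : γ * ε ≤ Real.exp (d / 8) / 6 := by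
      rw [← le_div_iff₀' hγ, div_div]
      exact hε ▸ min_le_left _ _
    calc γ * ε * Real.exp (-d / 8) ≤ Real.exp (d / 8) / 6 * Real.exp (-d / 8) := by gcongr
      _ = 1 / 6 := by
        rw [div_mul_eq_mul_div, ← Real.exp_add, neg_div, add_neg_cancel, Real.exp_zero]
  have hquarter : min (Real.exp (d / 8) / (24 * γ)) (1 / 8) = ε / 4 := by
    rw [hε, ← min_div_div_right (by norm_num : (0 : ℝ) ≤ 4), div_div]
    norm_num [mul_comm, mul_left_comm]
  rw [hquarter]
  nlinarith

end ReluBandit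

/-- lower bound on the Decision-Estimation Coefficient for ReLU
bandits over the Euclidean unit ball.  The models are
`M_v(π) = Rad(relu(⟪v,π⟫ − (1−ε)))` for unit vectors `v`, with reference model
`M̄(π) = Rad(0)`; `ε − f_v(π)` is the regret of `π` under `M_v`. -/
theorem relu_bandit_dec_lower_bound (d : ℕ) (hd : 16 ≤ d) (γ ε : ℝ) (hγ : 0 < γ)
    (hε : ε = min (Real.exp ((d : ℝ) / 8) / (6 * γ)) (1 / 2))
    (p : Measure {x : EuclideanSpace ℝ (Fin d) // ‖x‖ ≤ 1}) [IsProbabilityMeasure p] :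
    min (Real.exp ((d : ℝ) / 8) / (24 * γ)) (1 / 8) ≤
      ⨆ v : {v : EuclideanSpace ℝ (Fin d) // ‖v‖ = 1},
        ∫ π : {x : EuclideanSpace ℝ (Fin d) // ‖x‖ ≤ 1},
          (ε - max (⟪v.1, π.1⟫ - (1 - ε)) 0
            - γ * sqHellinger (rad (max (⟪v.1, π.1⟫ - (1 - ε)) 0)) (rad 0)) ∂p := by
  have hd0 : 0 < d := by omega
  have hε0 : 0 ≤ ε := hε ▸ le_min (by positivity) one_half_pos.le
  have hε2 : ε ≤ 1 / 2 := hε ▸ min_le_right _ _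
  obtain ⟨s, hs⟩ := exists_signVector_measureReal_le hd0 p measurable_subtype_coe fun π => π.2
  let v : {v : EuclideanSpace ℝ (Fin d) // ‖v‖ = 1} :=
    ⟨(√d)⁻¹ • signVector s, norm_inv_sqrt_smul_signVector hd0 s⟩
  have hbdd : BddAbove (Set.range fun v : {v : EuclideanSpace ℝ (Fin d) // ‖v‖ = 1} =>
      ∫ π : {x : EuclideanSpace ℝ (Fin d) // ‖x‖ ≤ 1}, reluDecIntegrand ε γ ⟪v.1, π.1⟫ ∂p) :=
    ⟨ε, Set.forall_mem_range.2 fun _ => integral_reluDecIntegrand_le p hε0 hγ.le _⟩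
  calc min (Real.exp (d / 8) / (24 * γ)) (1 / 8)
      ≤ ε - (1 + γ * ε) * ε * Real.exp (-d / 8) := min_le_sub_mul_exp_neg hd hγ hε
    _ ≤ ε - (1 + γ * ε) * ε * p.real {π | 1 / 2 ≤ ⟪v.1, π.1⟫} := by gcongr
    _ ≤ ∫ π, reluDecIntegrand ε γ ⟪v.1, π.1⟫ ∂p :=
      le_integral_reluDecIntegrand p hε0 hε2 hγ.le (by fun_prop)
        fun π => (real_inner_le_norm _ _).trans (by rw [v.2, one_mul]; exact π.2)
    _ ≤ _ := le_ciSup hbdd v
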